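/- Let A = KQ/I be an acyclic gentle algebra and C ⊆ mod(A,d) an irreducible component. Then C is regular (its generic module is a direct sum of band modules) if and only if C contains at least one module which is a direct sum of band modules. Moreover, if C contains a regular module M_0, then every module M in the open subset U = {M ∈ C : rank M(a) is maximal on C for all arrows a} is a direct sum of band modules. -/

import Mathlib

/- ------------------------------------------------------------------
  Common framework: quivers, matrix representation varieties with the
  Zariski topology, the base-change group action, (semi-)stability,
  Schur modules, direct sums, moduli spaces as topological GIT
  quotients, semi-invariants, normality via coordinate rings, and the
  tame / Schur-tame / strictly wild conditions.
------------------------------------------------------------------ -/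

namespace ModuliPaper

/-- A finite quiver: vertices `V`, arrows `Ar`, tail `s` and head `t`. -/
structure Quiv where
  V : Type
  Ar : Type
  [fintV : Fintype V]
  [decV : DecidableEq V]
  [fintA : Fintype Ar]
  [decA : DecidableEq Ar]
  s : Ar → V
  t : Ar → V

attribute [instance] Quiv.fintV Quiv.decV Quiv.fintA Quiv.decA

variable (K : Type) [Field K]

/-- Affine space over `K`, carrying the Zariski topology (below). -/
def AffSp (ι : Type) : Type := ι → K

/-- The Zariski topology on affine space: the basic open sets are the
complements of hypersurfaces. -/
noncomputable instance AffSp.topologicalSpace (ι : Type) : TopologicalSpace (AffSp K ι) :=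
  TopologicalSpace.generateFrom
    {U | ∃ p : MvPolynomial ι K, U = {x : AffSp K ι | MvPolynomial.eval x p ≠ 0}}

/-- A point of the representation space of the quiver `Q` with dimension
vector `d`: a matrix for every arrow. -/
structure Rep (Q : Quiv) (d : Q.V → ℕ) where
  mat : ∀ a : Q.Ar, Matrix (Fin (d (Q.t a))) (Fin (d (Q.s a))) K

/-- The coordinates of the representation space. -/
def CoordIdx (Q : Quiv) (d : Q.V → ℕ) : Type :=
  Σ a : Q.Ar, Fin (d (Q.t a)) × Fin (d (Q.s a))

def Rep.coords {Q : Quiv} {d : Q.V → ℕ} (M : Rep K Q d) : AffSp K (CoordIdx Q d) :=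
  fun c => M.mat c.1 c.2.1 c.2.2

/-- The Zariski topology on the representation space. -/
noncomputable instance Rep.topologicalSpace (Q : Quiv) (d : Q.V → ℕ) :
    TopologicalSpace (Rep K Q d) :=
  TopologicalSpace.induced (Rep.coords K) inferInstance

/-- The base change group `GL(d) = ∏ₓ GL(d(x),K)` (as a family of invertible
matrices) acting by simultaneous conjugation. -/
def glAct {Q : Quiv} {d : Q.V → ℕ}
    (g : ∀ x : Q.V, Matrix.GeneralLinearGroup (Fin (d x)) K) (M : Rep K Q d) :
    Rep K Q d :=
  ⟨fun a => (g (Q.t a) : Matrix (Fin (d (Q.t a))) (Fin (d (Q.t a))) K) * M.mat a *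
    (((g (Q.s a))⁻¹ : Matrix.GeneralLinearGroup (Fin (d (Q.s a))) K) :
      Matrix (Fin (d (Q.s a))) (Fin (d (Q.s a))) K)⟩

/-- Two points are isomorphic as modules iff they lie in the same `GL(d)`-orbit. -/
def Iso {Q : Quiv} {d : Q.V → ℕ} (M N : Rep K Q d) : Prop :=
  ∃ g, glAct K g M = N

/-- The `GL(d)`-orbit of a point of the representation space. -/
def glOrbit {Q : Quiv} {d : Q.V → ℕ} (M : Rep K Q d) : Set (Rep K Q d) :=
  {N | Iso K M N}

def IsGLInvariant {Q : Quiv} {d : Q.V → ℕ} (C : Set (Rep K Q d)) : Prop :=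
  ∀ g M, M ∈ C → glAct K g M ∈ C

/-- `C` is the closure of a single `GL(d)`-orbit. -/
def IsOrbitClosure {Q : Quiv} {d : Q.V → ℕ} (C : Set (Rep K Q d)) : Prop :=
  ∃ M : Rep K Q d, C = closure (glOrbit K M)

/-- Paths in a quiver, via Mathlib's `Quiver.Path`. -/
instance quivQuiver (Q : Quiv) : Quiver Q.V :=
  ⟨fun x y => {a : Q.Ar // Q.s a = x ∧ Q.t a = y}⟩

/-- The linear map attached to an arrow by a representation. -/
def arrowEval {Q : Quiv} {d : Q.V → ℕ} (M : Rep K Q d) {x y : Q.V} (e : x ⟶ y) :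
    (Fin (d x) → K) →ₗ[K] (Fin (d y) → K) := by
  obtain ⟨a, rfl, rfl⟩ := e
  exact (M.mat a).mulVecLin

/-- The linear map attached to a path by a representation. -/
def pathEval {Q : Quiv} {d : Q.V → ℕ} (M : Rep K Q d) :
    {x y : Q.V} → Quiver.Path x y → ((Fin (d x) → K) →ₗ[K] (Fin (d y) → K))
  | _, _, Quiver.Path.nil => LinearMap.id
  | _, _, Quiver.Path.cons p e => (arrowEval K M e).comp (pathEval M p)

/-- The evaluation of a K-linear combination of parallel paths (an element of the
path algebra) on a representation. -/
noncomputable def relEval {Q : Quiv} {d : Q.V → ℕ} (M : Rep K Q d) {x y : Q.V}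
    (r : Quiver.Path x y →₀ K) : (Fin (d x) → K) →ₗ[K] (Fin (d y) → K) :=
  r.sum fun p c => c • pathEval K M p

/-- A set of relations for a quiver: admissible elements of the path algebra. -/
structure RelSet (Q : Quiv) where
  rels : Set (Σ x y : Q.V, (Quiver.Path x y →₀ K))

/-- The module variety `mod(A,d)` of the bound quiver algebra `A = KQ/I`,
`I = ⟨rels⟩`: the locus where all relations vanish. -/
noncomputable def modVar {Q : Quiv} (R : RelSet K Q) (d : Q.V → ℕ) : Set (Rep K Q d) :=
  {M | ∀ r ∈ R.rels, relEval K M r.2.2 = 0}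

/-- `Q` has no oriented cycles. -/
def Quiv.IsAcyclic (Q : Quiv) : Prop :=
  ∀ (x : Q.V) (p : Quiver.Path x x), p = Quiver.Path.nil

/-- Admissibility of the ideal of relations, encoded semantically:
every relation lies in (the span of paths of) length `≥ 2`, and some power of the
arrow ideal is contained in the ideal of relations (i.e. sufficiently long paths
act by `0` on every module of the algebra). -/
noncomputable def RelSet.IsAdmissible {Q : Quiv} (R : RelSet K Q) : Prop :=
  (∀ r ∈ R.rels, ∀ p ∈ (r.2.2).support, 2 ≤ p.length) ∧
  ∃ L : ℕ, ∀ (d : Q.V → ℕ), ∀ M ∈ modVar K R d, ∀ (x y : Q.V) (p : Quiver.Path x y),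
    L ≤ p.length → pathEval K M p = 0

/-- A subrepresentation (= submodule) of a representation. -/
structure SubRep {Q : Quiv} {d : Q.V → ℕ} (M : Rep K Q d) where
  space : ∀ x : Q.V, Submodule K (Fin (d x) → K)
  stable : ∀ a : Q.Ar, ∀ v ∈ space (Q.s a), (M.mat a).mulVec v ∈ space (Q.t a)

/-- The dimension vector of a subrepresentation. -/
noncomputable def SubRep.dimVec {Q : Quiv} {d : Q.V → ℕ} {M : Rep K Q d}
    (W : SubRep K M) : Q.V → ℕ :=
  fun x => Module.finrank K (W.space x)

/-- The pairing `θ(e) = ∑ₓ θ(x) e(x)` of a weight with a dimension vector. -/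
def wt {Q : Quiv} (θ : Q.V → ℤ) (e : Q.V → ℕ) : ℤ := ∑ x : Q.V, θ x * (e x : ℤ)

/-- King's θ-semi-stability. -/
def IsSemiStable {Q : Quiv} {d : Q.V → ℕ} (θ : Q.V → ℤ) (M : Rep K Q d) : Prop :=
  wt θ d = 0 ∧ ∀ W : SubRep K M, wt θ (W.dimVec K) ≤ 0

/-- King's θ-stability. -/
def IsStable {Q : Quiv} {d : Q.V → ℕ} (θ : Q.V → ℤ) (M : Rep K Q d) : Prop :=
  d ≠ 0 ∧ wt θ d = 0 ∧
    ∀ W : SubRep K M, W.dimVec K ≠ 0 → W.dimVec K ≠ d → wt θ (W.dimVec K) < 0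

/-- Morphisms of representations. -/
def IsHom {Q : Quiv} {d d' : Q.V → ℕ} (M : Rep K Q d) (N : Rep K Q d')
    (φ : ∀ x : Q.V, Matrix (Fin (d' x)) (Fin (d x)) K) : Prop :=
  ∀ a : Q.Ar, φ (Q.t a) * M.mat a = N.mat a * φ (Q.s a)

/-- Endomorphisms of a representation. -/
def IsEndo {Q : Quiv} {d : Q.V → ℕ} (M : Rep K Q d)
    (φ : ∀ x : Q.V, Matrix (Fin (d x)) (Fin (d x)) K) : Prop :=
  IsHom K M M φ

/-- A Schur module: all endomorphisms are scalar, i.e. `End_A(M) ≅ K`. -/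
def IsSchur {Q : Quiv} {d : Q.V → ℕ} (M : Rep K Q d) : Prop :=
  ∀ φ, IsEndo K M φ → ∃ c : K, ∀ x : Q.V, φ x = c • (1 : Matrix (Fin (d x)) (Fin (d x)) K)

/-- The direct sum of two representations. -/
def dsum {Q : Quiv} {d₁ d₂ : Q.V → ℕ} (M : Rep K Q d₁) (N : Rep K Q d₂) :
    Rep K Q (d₁ + d₂) :=
  ⟨fun a => Matrix.reindex finSumFinEquiv finSumFinEquiv
    (Matrix.fromBlocks (M.mat a) 0 0 (N.mat a))⟩

/-- Transport of a representation along an equality of dimension vectors. -/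
def recast {Q : Quiv} {d d' : Q.V → ℕ} (h : d = d') (M : Rep K Q d) : Rep K Q d' :=
  h ▸ M

/-- The dimension vector of a list of representations. -/
def sumDim {Q : Quiv} : List (Σ e : Q.V → ℕ, Rep K Q e) → (Q.V → ℕ)
  | [] => 0
  | x :: L => x.1 + sumDim L

/-- The direct sum of a list of representations. -/
def listSum {Q : Quiv} : (L : List (Σ e : Q.V → ℕ, Rep K Q e)) → Rep K Q (sumDim K L)
  | [] => ⟨fun _ => 0⟩
  | x :: L => dsum K x.2 (listSum L)

/-- `M` is isomorphic to the direct sum of the members of the list `L`. -/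
def IsDirectSumOf {Q : Quiv} {d : Q.V → ℕ} (M : Rep K Q d)
    (L : List (Σ e : Q.V → ℕ, Rep K Q e)) : Prop :=
  ∃ h : sumDim K L = d, Iso K (recast K h (listSum K L)) M

/-- Indecomposability of a representation. -/
def Indec {Q : Quiv} {d : Q.V → ℕ} (M : Rep K Q d) : Prop :=
  d ≠ 0 ∧ ∀ (d₁ d₂ : Q.V → ℕ) (M₁ : Rep K Q d₁) (M₂ : Rep K Q d₂) (h : d₁ + d₂ = d),
    d₁ ≠ 0 → d₂ ≠ 0 → ¬ Iso K (recast K h (dsum K M₁ M₂)) M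

/-- An irreducible component of a (closed) subvariety `Z` of the representation
space: a maximal irreducible closed subset of `Z`. -/
def IsIrrComp {Q : Quiv} {d : Q.V → ℕ} (Z C : Set (Rep K Q d)) : Prop :=
  C ⊆ Z ∧ IsClosed C ∧ IsIrreducible C ∧
    ∀ D : Set (Rep K Q d), D ⊆ Z → IsClosed D → IsIrreducible D → C ⊆ D → C = D

/-- The θ-semi-stable locus of `C`. -/
def ssLocus {Q : Quiv} {d : Q.V → ℕ} (C : Set (Rep K Q d)) (θ : Q.V → ℤ) :
    Set (Rep K Q d) :=
  {M | M ∈ C ∧ IsSemiStable K θ M}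

/-- S-equivalence on the semistable locus: orbit closures meet inside the
semistable locus.  The GIT quotient identifies exactly S-equivalent points. -/
def SEquiv {Q : Quiv} {d : Q.V → ℕ} (C : Set (Rep K Q d)) (θ : Q.V → ℤ)
    (M N : ↥(ssLocus K C θ)) : Prop :=
  (closure (glOrbit K M.1) ∩ closure (glOrbit K N.1) ∩ ssLocus K C θ).Nonempty

/-- The moduli space `M(C)^{ss}_θ` of θ-semi-stable modules in `C`, realized
(as a topological space) as the quotient of the semistable locus of `C` by
S-equivalence; its points are the θ-polystable modules in `C`. -/
def ModuliSpace {Q : Quiv} {d : Q.V → ℕ} (C : Set (Rep K Q d)) (θ : Q.V → ℤ) : Type :=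
  Quot (SEquiv K C θ)

noncomputable instance {Q : Quiv} {d : Q.V → ℕ} (C : Set (Rep K Q d)) (θ : Q.V → ℤ) :
    TopologicalSpace (ModuliSpace K C θ) :=
  instTopologicalSpaceQuot

/-- The image of `C^{ss}_θ` in the moduli space of the ambient variety `Z`:
this is `M(C)^{ss}_θ` as a (closed) subvariety of `M(Z)^{ss}_θ`. -/
def moduliImage {Q : Quiv} {d : Q.V → ℕ} (Z C : Set (Rep K Q d)) (θ : Q.V → ℤ) :
    Set (ModuliSpace K Z θ) :=
  Quot.mk _ '' {M : ↥(ssLocus K Z θ) | M.1 ∈ C}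

/-- The `m`-th symmetric power of a topological space. -/
def SymPow (m : ℕ) (X : Type*) [TopologicalSpace X] : Type _ :=
  Quot (fun f g : Fin m → X => ∃ σ : Equiv.Perm (Fin m), f = g ∘ σ)

noncomputable instance (m : ℕ) (X : Type*) [TopologicalSpace X] :
    TopologicalSpace (SymPow m X) :=
  instTopologicalSpaceQuot

/-- Projective `m`-space over `K` with its Zariski topology (quotient of the
punctured affine cone). -/
def ProjSpace (m : ℕ) : Type :=
  Quot (fun v w : {x : AffSp K (Fin (m + 1)) // ∃ i, x i ≠ 0} =>
    ∃ c : K, c ≠ 0 ∧ ∀ i, w.1 i = c * v.1 i)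

noncomputable instance (m : ℕ) : TopologicalSpace (ProjSpace K m) :=
  instTopologicalSpaceQuot

/-- A product of projective spaces `ℙ^{m 0} × ⋯ × ℙ^{m (n-1)}` over `K`, with its
Zariski topology (quotient of a product of punctured affine cones, carrying the
Zariski topology of the total affine space). -/
def ProdProj (n : ℕ) (m : Fin n → ℕ) : Type :=
  Quot (fun v w : {x : AffSp K (Σ i : Fin n, Fin (m i + 1)) // ∀ i, ∃ j, x ⟨i, j⟩ ≠ 0} =>
    ∃ c : Fin n → K, (∀ i, c i ≠ 0) ∧ ∀ i j, w.1 ⟨i, j⟩ = c i * v.1 ⟨i, j⟩)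

noncomputable instance (n : ℕ) (m : Fin n → ℕ) : TopologicalSpace (ProdProj K n m) :=
  instTopologicalSpaceQuot

end ModuliPaper
namespace ModuliPaper

variable (K : Type) [Field K]

/- --------------------- semi-invariants --------------------- -/

/-- The value of the character `χ_θ` of `GL(d)` at `g`:
`χ_θ(g) = ∏ₓ det(g(x))^{θ(x)}`. -/
noncomputable def chiWt {Q : Quiv} {d : Q.V → ℕ} (θ : Q.V → ℤ)
    (g : ∀ x : Q.V, Matrix.GeneralLinearGroup (Fin (d x)) K) : K :=
  ∏ x : Q.V, ((g x : Matrix (Fin (d x)) (Fin (d x)) K).det) ^ (θ x)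

/-- A semi-invariant of weight `χ_θ` on `C`: a regular (polynomial) function on
`C` satisfying `f(g·M) = χ_θ(g)·f(M)`. -/
def IsSemiInvariant {Q : Quiv} {d : Q.V → ℕ} (C : Set (Rep K Q d)) (θ : Q.V → ℤ)
    (f : ↥C → K) : Prop :=
  (∃ p : MvPolynomial (CoordIdx Q d) K,
      ∀ M : ↥C, f M = MvPolynomial.eval (Rep.coords K M.1) p) ∧
  ∀ (g) (M : ↥C) (h : glAct K g M.1 ∈ C), f ⟨glAct K g M.1, h⟩ = chiWt K θ g * f M

/-- The space `SI(C)_θ` of semi-invariants of weight `χ_θ` on `C`. -/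
noncomputable def SIModule {Q : Quiv} {d : Q.V → ℕ} (C : Set (Rep K Q d))
    (θ : Q.V → ℤ) : Submodule K (↥C → K) where
  carrier := {f | IsSemiInvariant K C θ f}
  add_mem' := by
    rintro f₁ f₂ ⟨⟨p₁, hp₁⟩, hw₁⟩ ⟨⟨p₂, hp₂⟩, hw₂⟩
    refine ⟨⟨p₁ + p₂, fun M => ?_⟩, fun g M h => ?_⟩
    · simp [hp₁ M, hp₂ M]
    · have := hw₁ g M h; have := hw₂ g M h
      simp only [Pi.add_apply, *]; ring
  zero_mem' := ⟨⟨0, fun M => by simp⟩, fun g M h => by simp⟩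
  smul_mem' := by
    rintro c f ⟨⟨p, hp⟩, hw⟩
    refine ⟨⟨c • p, fun M => ?_⟩, fun g M h => ?_⟩
    · exact (congrArg (c * ·) (hp M)).trans (MvPolynomial.smul_eval (Rep.coords K M.1) p c).symm
    · have := hw g M h
      simp only [Pi.smul_apply, smul_eq_mul, *]; ring

/- --------------------- coordinate rings and normality --------------------- -/

/-- The vanishing ideal of a subset of the representation space. -/
noncomputable def vanishingIdeal {Q : Quiv} {d : Q.V → ℕ} (C : Set (Rep K Q d)) :
    Ideal (MvPolynomial (CoordIdx Q d) K) where
  carrier := {p | ∀ M ∈ C, MvPolynomial.eval (Rep.coords K M) p = 0}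
  add_mem' := by intro p q hp hq M hM; simp [hp M hM, hq M hM]
  zero_mem' := by intro M hM; simp
  smul_mem' := by intro c p hp M hM; simp [smul_eq_mul, hp M hM]

/-- The coordinate ring `K[C]` of a subvariety of the representation space. -/
noncomputable def coordRing {Q : Quiv} {d : Q.V → ℕ} (C : Set (Rep K Q d)) : Type :=
  MvPolynomial (CoordIdx Q d) K ⧸ vanishingIdeal K C

noncomputable instance {Q : Quiv} {d : Q.V → ℕ} (C : Set (Rep K Q d)) :
    CommRing (coordRing K C) :=
  Ideal.Quotient.commRing _

/-- Normality of a variety: its coordinate ring is an integrally closed domain. -/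
def IsNormalVar {Q : Quiv} {d : Q.V → ℕ} (C : Set (Rep K Q d)) : Prop :=
  IsDomain (coordRing K C) ∧ IsIntegrallyClosed (coordRing K C)

/- --------------------- gentle and string algebras --------------------- -/

/-- "at most one element" of a set. -/
def AtMostOne {α : Type*} (s : Set α) : Prop := ∀ a ∈ s, ∀ b ∈ s, a = b

/-- "at most two elements" of a set. -/
def AtMostTwo {α : Type*} (s : Set α) : Prop :=
  ∀ a ∈ s, ∀ b ∈ s, ∀ c ∈ s, a = b ∨ a = c ∨ b = c

/-- A set of monomial (length-two) relations: pairs `(a,b)` of composable arrows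
(`a` followed by `b`), generating the ideal `I = ⟨{ba : (a,b) ∈ R}⟩`. -/
structure PairRels (Q : Quiv) where
  R : Set (Q.Ar × Q.Ar)
  comp : ∀ p ∈ R, Q.t p.1 = Q.s p.2

/-- The module variety of the algebra `KQ/⟨R⟩` with length-two monomial
relations `R`: the locus where all composites `M(b)M(a)`, `(a,b) ∈ R`, vanish. -/
def pairModVar {Q : Quiv} (P : PairRels Q) (d : Q.V → ℕ) : Set (Rep K Q d) :=
  {M | ∀ a b, (hab : (a, b) ∈ P.R) →
    ∀ (i : Fin (d (Q.t b))) (j : Fin (d (Q.s a))),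
      ∑ k : Fin (d (Q.t a)),
        M.mat b i (finCongr (congrArg d (P.comp (a, b) hab)) k) * M.mat a k j = 0}

/-- The gentle conditions on a bound quiver `(Q, I)` with `I` generated by the
length-two paths in `R`. -/
def PairRels.IsGentle {Q : Quiv} (P : PairRels Q) : Prop :=
  (∀ x : Q.V, AtMostTwo {a | Q.s a = x} ∧ AtMostTwo {a | Q.t a = x}) ∧
  (∀ a : Q.Ar, AtMostOne {b | Q.t a = Q.s b ∧ (a, b) ∉ P.R} ∧
               AtMostOne {b | Q.t b = Q.s a ∧ (b, a) ∉ P.R}) ∧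
  (∀ a : Q.Ar, AtMostOne {b | (a, b) ∈ P.R} ∧ AtMostOne {b | (b, a) ∈ P.R})

/-- The length-two path `a`-then-`b` in `Q`. -/
def path2 {Q : Quiv} (a b : Q.Ar) (h : Q.t a = Q.s b) : Quiver.Path (Q.s a) (Q.t b) :=
  (Quiver.Path.nil.cons (⟨a, rfl, rfl⟩ : (Q.s a : Q.V) ⟶ Q.t a)).cons
    (⟨b, h.symm, rfl⟩ : (Q.t a : Q.V) ⟶ Q.t b)

/-- A set of monomial relations (paths of length `≥ 2`). -/
structure MonRels (Q : Quiv) where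
  R : Set (Σ x y : Q.V, Quiver.Path x y)
  len2 : ∀ r ∈ R, 2 ≤ r.2.2.length

/-- The module variety of the monomial algebra `KQ/⟨R⟩`. -/
def monModVar {Q : Quiv} (R : MonRels Q) (d : Q.V → ℕ) : Set (Rep K Q d) :=
  {M | ∀ r ∈ R.R, pathEval K M r.2.2 = 0}

/-- The length-two path `a`-then-`b` lies in the monomial ideal `⟨R⟩`. -/
def MonRels.pairIn {Q : Quiv} (R : MonRels Q) (a b : Q.Ar) : Prop :=
  ∃ h : Q.t a = Q.s b, (⟨Q.s a, Q.t b, path2 a b h⟩ : Σ x y : Q.V, Quiver.Path x y) ∈ R.R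

/-- The string algebra conditions on a monomial bound quiver `(Q, ⟨R⟩)`. -/
def MonRels.IsString {Q : Quiv} (R : MonRels Q) : Prop :=
  (∀ x : Q.V, AtMostTwo {a | Q.s a = x} ∧ AtMostTwo {a | Q.t a = x}) ∧
  (∀ a : Q.Ar, AtMostOne {b | Q.t a = Q.s b ∧ ¬ R.pairIn a b} ∧
               AtMostOne {b | Q.t b = Q.s a ∧ ¬ R.pairIn b a})

/-- A coloring of a quiver: a map on arrows whose fibres are directed paths. -/
structure Coloring (Q : Quiv) (S : Type) where
  c : Q.Ar → S
  isPath : ∀ s : S, ∃ L : List Q.Ar, L.Nodup ∧ (∀ a, a ∈ L ↔ c a = s) ∧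
    L.Chain' (fun a b => Q.t a = Q.s b)

/-- The set of length-two relations `I_c` induced by a coloring: all composable
pairs of arrows of the same color. -/
def colorRels {Q : Quiv} {S : Type} (col : Coloring Q S) : PairRels Q where
  R := {p | Q.t p.1 = Q.s p.2 ∧ col.c p.1 = col.c p.2}
  comp := fun _ hp => hp.1

/- --------------------- band modules (string algebras) --------------------- -/

/-- Over an acyclic string algebra, the indecomposable modules are string and
band modules (Butler–Ringel), and the band modules are exactly the
indecomposables `M` with `dim M = ∑ₐ rank M(a)`. -/
def IsBand {Q : Quiv} {d : Q.V → ℕ} (M : Rep K Q d) : Prop :=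
  Indec K M ∧ (∑ x : Q.V, d x) = ∑ a : Q.Ar, (M.mat a).rank

/-- `M` is (isomorphic to) a direct sum of band modules. -/
def IsSumOfBands {Q : Quiv} {d : Q.V → ℕ} (M : Rep K Q d) : Prop :=
  ∃ L : List (Σ e : Q.V → ℕ, Rep K Q e), (∀ p ∈ L, IsBand K p.2) ∧ IsDirectSumOf K M L

/-- A regular irreducible component: the generic module of `C` is a direct sum
of band modules. -/
def IsGenericallyBands {Q : Quiv} {d : Q.V → ℕ} (C : Set (Rep K Q d)) : Prop :=
  ∃ U : Set (Rep K Q d), IsOpen U ∧ (U ∩ C).Nonempty ∧ ∀ M ∈ U ∩ C, IsSumOfBands K M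

end ModuliPaper
namespace ModuliPaper

variable (K : Type) [Field K]

/- --------------------- tame and Schur-tame --------------------- -/

/-- A one-parameter algebraic family of `d`-dimensional representations defined
over a localization `K[t]_f` of `K[t]`: a free `K[t]_f`-module structure is
encoded by matrices of polynomials divided by a power of `f`. -/
structure ParamFamily (Q : Quiv) (d : Q.V → ℕ) where
  f : Polynomial K
  hf : f ≠ 0
  k : ℕ
  num : ∀ a : Q.Ar, Matrix (Fin (d (Q.t a))) (Fin (d (Q.s a))) (Polynomial K)

/-- The member of the family at the parameter `lam` (i.e. `T ⊗_{K[t]_f} K[t]/(t-lam)`). -/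
noncomputable def ParamFamily.evalAt {Q : Quiv} {d : Q.V → ℕ} (F : ParamFamily K Q d)
    (lam : K) : Rep K Q d :=
  ⟨fun a => Matrix.of fun i j =>
    Polynomial.eval lam (F.num a i j) / (Polynomial.eval lam F.f) ^ F.k⟩

/-- The algebra with module varieties `MV` is Schur-tame: for every dimension
vector `d` there are finitely many one-parameter families of `d`-dimensional
modules, each consisting of pairwise non-isomorphic Schur modules (a
Schur-embedding `T_i ⊗_{R_i} -`), such that every `d`-dimensional Schur module
— up to finitely many isomorphism classes — belongs to one of the families. -/
noncomputable def IsSchurTame {Q : Quiv} (MV : ∀ d : Q.V → ℕ, Set (Rep K Q d)) : Prop :=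
  ∀ d : Q.V → ℕ, ∃ (n : ℕ) (F : Fin n → ParamFamily K Q d),
    (∀ i lam, Polynomial.eval lam (F i).f ≠ 0 →
      (F i).evalAt K lam ∈ MV d ∧ IsSchur K ((F i).evalAt K lam)) ∧
    (∀ i lam₁ lam₂, Polynomial.eval lam₁ (F i).f ≠ 0 → Polynomial.eval lam₂ (F i).f ≠ 0 →
      Iso K ((F i).evalAt K lam₁) ((F i).evalAt K lam₂) → lam₁ = lam₂) ∧
    ∃ Exc : Set (Rep K Q d), Exc.Finite ∧
      ∀ M ∈ MV d, IsSchur K M →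
        (∃ i lam, Polynomial.eval lam (F i).f ≠ 0 ∧ Iso K M ((F i).evalAt K lam)) ∨
        (∃ E ∈ Exc, Iso K M E)

/-- The algebra with module varieties `MV` is tame: for every dimension vector
`d` there are finitely many one-parameter families of `d`-dimensional modules,
each consisting of pairwise non-isomorphic indecomposable modules (a
representation embedding `T_i ⊗_{R_i} -`), such that every `d`-dimensional
indecomposable module — up to finitely many isomorphism classes — belongs to
one of the families. -/
noncomputable def IsTame {Q : Quiv} (MV : ∀ d : Q.V → ℕ, Set (Rep K Q d)) : Prop :=
  ∀ d : Q.V → ℕ, ∃ (n : ℕ) (F : Fin n → ParamFamily K Q d),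
    (∀ i lam, Polynomial.eval lam (F i).f ≠ 0 →
      (F i).evalAt K lam ∈ MV d ∧ Indec K ((F i).evalAt K lam)) ∧
    (∀ i lam₁ lam₂, Polynomial.eval lam₁ (F i).f ≠ 0 → Polynomial.eval lam₂ (F i).f ≠ 0 →
      Iso K ((F i).evalAt K lam₁) ((F i).evalAt K lam₂) → lam₁ = lam₂) ∧
    ∃ Exc : Set (Rep K Q d), Exc.Finite ∧
      ∀ M ∈ MV d, Indec K M →
        (∃ i lam, Polynomial.eval lam (F i).f ≠ 0 ∧ Iso K M ((F i).evalAt K lam)) ∨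
        (∃ E ∈ Exc, Iso K M E)

/- --------------------- strictly wild algebras --------------------- -/

/-- The representation of `Q` of dimension vector `m • e` obtained from a
template `T` of matrices over the free algebra `K⟨x,y⟩` (encoding an
`A`-`K⟨x,y⟩`-bimodule free of finite rank over `K⟨x,y⟩`) by specializing
`(x,y)` to the pair of `m × m` matrices `(X,Y)`. -/
noncomputable def blockRep {Q : Quiv} (e : Q.V → ℕ) (m : ℕ)
    (T : ∀ a : Q.Ar, Matrix (Fin (e (Q.t a))) (Fin (e (Q.s a))) (FreeAlgebra K (Fin 2)))
    (X Y : Matrix (Fin m) (Fin m) K) : Rep K Q (fun x => e x * m) :=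
  ⟨fun a => Matrix.of fun i j =>
    (FreeAlgebra.lift K ![X, Y] (T a (finProdFinEquiv.symm i).1 (finProdFinEquiv.symm j).1))
      (finProdFinEquiv.symm i).2 (finProdFinEquiv.symm j).2⟩

/-- The block-diagonal family of matrices induced by an `m' × m` matrix `ψ`:
the image of a morphism of `K⟨x,y⟩`-modules under the functor `T ⊗ -`. -/
def blockify {Q : Quiv} (e : Q.V → ℕ) {m m' : ℕ} (ψ : Matrix (Fin m') (Fin m) K) :
    ∀ x : Q.V, Matrix (Fin (e x * m')) (Fin (e x * m)) K :=
  fun _ => Matrix.of fun i j =>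
    if (finProdFinEquiv.symm i).1 = (finProdFinEquiv.symm j).1 then
      ψ (finProdFinEquiv.symm i).2 (finProdFinEquiv.symm j).2
    else 0

/-- Strict wildness of the algebra with module varieties `MV`: there is an exact
`K`-linear functor `mod K⟨x,y⟩ → mod A`, given by tensoring with a bimodule
free of finite rank over `K⟨x,y⟩` (encoded by a template `T`), which is fully
faithful. -/
noncomputable def IsStrictlyWild {Q : Quiv} (MV : ∀ d : Q.V → ℕ, Set (Rep K Q d)) : Prop :=
  ∃ (e : Q.V → ℕ)
    (T : ∀ a : Q.Ar, Matrix (Fin (e (Q.t a))) (Fin (e (Q.s a))) (FreeAlgebra K (Fin 2))),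
    (∀ (m : ℕ) (X Y : Matrix (Fin m) (Fin m) K),
      blockRep K e m T X Y ∈ MV (fun x => e x * m)) ∧
    (∀ (m m' : ℕ) (X Y : Matrix (Fin m) (Fin m) K) (X' Y' : Matrix (Fin m') (Fin m') K),
      -- functoriality: morphisms of `K⟨x,y⟩`-modules map to morphisms
      (∀ ψ : Matrix (Fin m') (Fin m) K, ψ * X = X' * ψ → ψ * Y = Y' * ψ →
        IsHom K (blockRep K e m T X Y) (blockRep K e m' T X' Y') (blockify K e ψ)) ∧
      -- faithfulness
      (∀ ψ₁ ψ₂ : Matrix (Fin m') (Fin m) K, blockify (Q := Q) K e ψ₁ = blockify K e ψ₂ → ψ₁ = ψ₂) ∧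
      -- fullness
      (∀ φ, IsHom K (blockRep K e m T X Y) (blockRep K e m' T X' Y') φ →
        ∃ ψ : Matrix (Fin m') (Fin m) K, ψ * X = X' * ψ ∧ ψ * Y = Y' * ψ ∧ φ = blockify K e ψ))

/- --------------------- θ-stable decompositions --------------------- -/

/-- The list of representations `N i j`, `j < m i`, over the indices `i` with
`i < l`. -/
def famList {Q : Quiv} {nn : ℕ} (dd : Fin nn → Q.V → ℕ) (m : Fin nn → ℕ) (l : ℕ)
    (N : ∀ i : Fin nn, Fin (m i) → Rep K Q (dd i)) : List (Σ e : Q.V → ℕ, Rep K Q e) :=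
  ((List.finRange nn).filter (fun i : Fin nn => decide ((i : ℕ) < l))).flatMap
    (fun i : Fin nn => (List.finRange (m i)).map (fun j => ⟨dd i, N i j⟩))

/-- A θ-stable decomposition `C = m₀·C₀ ∔ m₁·C₁ ∔ ⋯`: for the generic module
`M ∈ C^{ss}_θ`, the associated θ-polystable module `gr_θ(M)` (the unique
polystable module in the closure of the orbit of `M` within the semistable
locus) is a direct sum of θ-stable modules, `m i` of which belong to `Cs i`. -/
def ThetaStableDecomp {Q : Quiv} {d : Q.V → ℕ} (C : Set (Rep K Q d)) (θ : Q.V → ℤ)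
    {nn : ℕ} (dd : Fin nn → Q.V → ℕ) (m : Fin nn → ℕ)
    (Cs : ∀ i, Set (Rep K Q (dd i))) : Prop :=
  ∃ U : Set (Rep K Q d), IsOpen U ∧ (U ∩ C).Nonempty ∧
    ∀ M ∈ U ∩ C, IsSemiStable K θ M ∧
      ∃ N : ∀ i, Fin (m i) → Rep K Q (dd i),
        (∀ i j, N i j ∈ Cs i ∧ IsStable K θ (N i j)) ∧
        ∃ P ∈ closure (glOrbit K M), IsSemiStable K θ P ∧
          IsDirectSumOf K P (famList K dd m nn N)

/-- The dimension vector `∑_{i < l} m i • dd i`. -/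
def belowDim {Q : Quiv} {nn : ℕ} (dd : Fin nn → Q.V → ℕ) (m : Fin nn → ℕ) (l : ℕ) :
    Q.V → ℕ :=
  fun x => ∑ i ∈ Finset.univ.filter (fun i : Fin nn => (i : ℕ) < l), m i * dd i x

/-- The direct sum locus `C₀^{⊕ m₀} ⊕ ⋯ ⊕ C_{l-1}^{⊕ m_{l-1}}`. -/
def sumLocusBelow {Q : Quiv} {nn : ℕ} (dd : Fin nn → Q.V → ℕ) (m : Fin nn → ℕ) (l : ℕ)
    (Cs : ∀ i, Set (Rep K Q (dd i))) : Set (Rep K Q (belowDim dd m l)) :=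
  {M | ∃ N : ∀ i, Fin (m i) → Rep K Q (dd i),
    (∀ (i : Fin nn) (j : Fin (m i)), (i : ℕ) < l → N i j ∈ Cs i) ∧ IsDirectSumOf K M (famList K dd m l N)}

/- --------------------- extensions --------------------- -/

/-- The extension of `N` by `M` (`0 → M → Z → N → 0`) determined by the blocks
`E`: `Z(a) = [[M(a), E(a)], [0, N(a)]]`. -/
def triSum {Q : Quiv} {d₁ d₂ : Q.V → ℕ} (M : Rep K Q d₁) (N : Rep K Q d₂)
    (E : ∀ a : Q.Ar, Matrix (Fin (d₁ (Q.t a))) (Fin (d₂ (Q.s a))) K) :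
    Rep K Q (d₁ + d₂) :=
  ⟨fun a => Matrix.reindex finSumFinEquiv finSumFinEquiv
    (Matrix.fromBlocks (M.mat a) (E a) 0 (N.mat a))⟩

/-- `ext¹_A(D, E) = 0`: the minimal dimension of `Ext¹_A(X,Y)` over
`(X,Y) ∈ D × E` vanishes, i.e. there is a pair `(X,Y) ∈ D × E` all of whose
extensions (inside the module variety `MV`) split. -/
def Ext1Vanishes {Q : Quiv} (MV : ∀ e : Q.V → ℕ, Set (Rep K Q e)) {dX dY : Q.V → ℕ}
    (D : Set (Rep K Q dX)) (E : Set (Rep K Q dY)) : Prop :=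
  ∃ X ∈ D, ∃ Y ∈ E, ∀ B, triSum K Y X B ∈ MV (dY + dX) →
    Iso K (triSum K Y X B) (dsum K Y X)

end ModuliPaper

/-! At a vertex `x` of a gentle quiver, an arrow `u` into `x` and an arrow `v` out of `x`
with `vu ∈ I` satisfy `rank M(u) + rank M(v) ≤ dim M_x` for every module `M`, and the gentle
axioms match the (at most two) incoming and (at most two) outgoing arrows into such pairs.
Summing over the vertices gives `∑ₐ rank M(a) ≤ dim M` for every module `M`; this bound is
additive on direct sums, so equality holds exactly when every indecomposable summand attains
it, i.e. is a band module. A direct sum of bands `M₀ ∈ C` therefore has maximal total rank,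
and so does every module of `C` all of whose ranks are at least those of `M₀`, an open
condition that holds in particular where the ranks are maximal on `C`. -/

namespace ModuliPaper

variable {K : Type} {Q : Quiv} {d d' d₁ d₂ : Q.V → ℕ}

section Recast

@[ext]
lemma Rep.ext' {M N : Rep K Q d} (h : ∀ a, M.mat a = N.mat a) : M = N := by
  cases M; cases N; simpa [funext_iff] using h

variable (h : d = d')

lemma recast_mat (M : Rep K Q d) (a : Q.Ar) (i : Fin (d' (Q.t a))) (j : Fin (d' (Q.s a))) :
    (recast K h M).mat a i j = M.mat a (i.cast (by rw [h])) (j.cast (by rw [h])) := by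
  subst h; rfl

lemma recast_recast {d'' : Q.V → ℕ} (h' : d' = d'') (M : Rep K Q d) :
    recast K h' (recast K h M) = recast K (h.trans h') M := by
  subst h h'; rfl

lemma sumDim_append (L₁ L₂ : List (Σ e : Q.V → ℕ, Rep K Q e)) :
    sumDim K (L₁ ++ L₂) = sumDim K L₁ + sumDim K L₂ := by
  induction L₁ with
  | nil => exact (zero_add _).symm
  | cons x L ih => exact (congrArg (x.1 + ·) ih).trans (add_assoc _ _ _).symm

end Recast

variable [Field K]

section Isomorphism

lemma glAct_one (M : Rep K Q d) : glAct K 1 M = M := by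
  ext1 a; simp [glAct]

lemma glAct_mul (g g' : ∀ x, Matrix.GeneralLinearGroup (Fin (d x)) K) (M : Rep K Q d) :
    glAct K (g * g') M = glAct K g (glAct K g' M) := by
  ext1 a; simp [glAct, Matrix.mul_assoc]

lemma Iso.symm {M N : Rep K Q d} (h : Iso K M N) : Iso K N M := by
  obtain ⟨g, rfl⟩ := h
  exact ⟨g⁻¹, by rw [← glAct_mul, inv_mul_cancel, glAct_one]⟩

lemma Iso.trans {M N P : Rep K Q d} (h₁ : Iso K M N) (h₂ : Iso K N P) : Iso K M P := by
  obtain ⟨g₁, rfl⟩ := h₁; obtain ⟨g₂, rfl⟩ := h₂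
  exact ⟨g₂ * g₁, glAct_mul g₂ g₁ M⟩

lemma rank_glAct_mat (g : ∀ x, Matrix.GeneralLinearGroup (Fin (d x)) K) (M : Rep K Q d)
    (a : Q.Ar) : ((glAct K g M).mat a).rank = (M.mat a).rank := by
  rw [glAct, Matrix.rank_mul_eq_left_of_isUnit_det _ _
      ((Matrix.isUnit_iff_isUnit_det _).mp (g (Q.s a))⁻¹.isUnit),
    Matrix.rank_mul_eq_right_of_isUnit_det _ _
      ((Matrix.isUnit_iff_isUnit_det _).mp (g (Q.t a)).isUnit)]

end Isomorphism

section TotalRank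

def totalDim (d : Q.V → ℕ) : ℕ := ∑ x, d x

noncomputable def Rep.totalRank (M : Rep K Q d) : ℕ := ∑ a, (M.mat a).rank

lemma totalDim_add : totalDim (d₁ + d₂) = totalDim d₁ + totalDim d₂ :=
  Finset.sum_add_distrib

lemma totalDim_eq_zero : totalDim d = 0 ↔ d = 0 := by
  simp [totalDim, funext_iff]

lemma Iso.totalRank_eq {M N : Rep K Q d} (h : Iso K M N) : M.totalRank = N.totalRank := by
  obtain ⟨g, rfl⟩ := h
  simp only [Rep.totalRank, rank_glAct_mat]

lemma totalRank_recast (h : d = d') (M : Rep K Q d) :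
    (recast K h M).totalRank = M.totalRank := by
  subst h; rfl

end TotalRank

section DirectSum

lemma rank_fromBlocks_zero_zero {m₁ m₂ n₁ n₂ : Type} [Fintype m₁] [Fintype m₂] [Fintype n₁]
    [Fintype n₂] [DecidableEq n₁] [DecidableEq n₂] (A : Matrix m₁ n₁ K) (B : Matrix m₂ n₂ K) :
    (Matrix.fromBlocks A 0 0 B).rank = A.rank + B.rank := by
  have hmul : (Matrix.fromBlocks A 0 0 B).mulVecLin =
      (LinearEquiv.sumArrowLequivProdArrow m₁ m₂ K K).symm.toLinearMap ∘ₗ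
        (A.mulVecLin.prodMap B.mulVecLin) ∘ₗ
        (LinearEquiv.sumArrowLequivProdArrow n₁ n₂ K K).toLinearMap := by
    refine LinearMap.ext fun v => funext fun i => ?_
    cases i <;> simp [Matrix.fromBlocks_mulVec, LinearEquiv.sumArrowLequivProdArrow,
      Equiv.sumArrowEquivProdArrow]
  let e : (A.mulVecLin.range.prod B.mulVecLin.range) ≃ₗ[K]
      (A.mulVecLin.range × B.mulVecLin.range) :=
    { toFun x := (⟨x.1.1, x.2.1⟩, ⟨x.1.2, x.2.2⟩)
      invFun y := ⟨(y.1.1, y.2.1), ⟨y.1.2, y.2.2⟩⟩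
      map_add' _ _ := rfl
      map_smul' _ _ := rfl }
  rw [Matrix.rank, Matrix.rank, Matrix.rank, hmul, LinearMap.range_comp,
    LinearMap.range_comp_of_range_eq_top _ (LinearEquiv.range _), LinearEquiv.finrank_map_eq,
    LinearMap.range_prodMap, e.finrank_eq, Module.finrank_prod]

lemma dsum_mat (M : Rep K Q d₁) (N : Rep K Q d₂) (a : Q.Ar)
    (i : Fin (d₁ (Q.t a) + d₂ (Q.t a))) (j : Fin (d₁ (Q.s a) + d₂ (Q.s a))) :
    (dsum K M N).mat a i j =
      if hi : i < d₁ (Q.t a) then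
        if hj : j < d₁ (Q.s a) then M.mat a ⟨i, hi⟩ ⟨j, hj⟩ else 0
      else
        if hj : j < d₁ (Q.s a) then 0
        else N.mat a ⟨i - d₁ (Q.t a), by omega⟩ ⟨j - d₁ (Q.s a), by omega⟩ := by
  obtain ⟨i, rfl⟩ := finSumFinEquiv.surjective i
  obtain ⟨j, rfl⟩ := finSumFinEquiv.surjective j
  cases i <;> cases j <;> simp [dsum]

lemma rank_dsum_mat (M : Rep K Q d₁) (N : Rep K Q d₂) (a : Q.Ar) :
    ((dsum K M N).mat a).rank = (M.mat a).rank + (N.mat a).rank := by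
  rw [dsum, Matrix.rank_reindex, rank_fromBlocks_zero_zero]

lemma totalRank_dsum (M : Rep K Q d₁) (N : Rep K Q d₂) :
    (dsum K M N).totalRank = M.totalRank + N.totalRank := by
  simp only [Rep.totalRank, rank_dsum_mat, Finset.sum_add_distrib]

noncomputable def blockGL {m n : ℕ} (u : Matrix.GeneralLinearGroup (Fin m) K)
    (v : Matrix.GeneralLinearGroup (Fin n) K) : Matrix.GeneralLinearGroup (Fin (m + n)) K where
  val := Matrix.reindex finSumFinEquiv finSumFinEquiv (Matrix.fromBlocks u 0 0 v)
  inv := Matrix.reindex finSumFinEquiv finSumFinEquiv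
    (Matrix.fromBlocks (u⁻¹ : Matrix.GeneralLinearGroup (Fin m) K) 0 0
      (v⁻¹ : Matrix.GeneralLinearGroup (Fin n) K))
  val_inv := by simp [Matrix.fromBlocks_multiply]
  inv_val := by simp [Matrix.fromBlocks_multiply]

lemma glAct_dsum (g₁ : ∀ x, Matrix.GeneralLinearGroup (Fin (d₁ x)) K)
    (g₂ : ∀ x, Matrix.GeneralLinearGroup (Fin (d₂ x)) K) (M : Rep K Q d₁) (N : Rep K Q d₂) :
    glAct K (fun x => blockGL (g₁ x) (g₂ x)) (dsum K M N)
      = dsum K (glAct K g₁ M) (glAct K g₂ N) := by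
  ext1 a
  simp [glAct, dsum, blockGL, Matrix.fromBlocks_multiply]

lemma Iso.dsum {M₁ N₁ : Rep K Q d₁} {M₂ N₂ : Rep K Q d₂} (h₁ : Iso K M₁ N₁) (h₂ : Iso K M₂ N₂) :
    Iso K (dsum K M₁ M₂) (dsum K N₁ N₂) := by
  obtain ⟨g₁, rfl⟩ := h₁
  obtain ⟨g₂, rfl⟩ := h₂
  exact ⟨fun x => blockGL (g₁ x) (g₂ x), glAct_dsum g₁ g₂ M₁ M₂⟩

lemma dsum_assoc {e₁ e₂ e₃ : Q.V → ℕ} (A : Rep K Q e₁) (B : Rep K Q e₂) (C : Rep K Q e₃)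
    (h : e₁ + (e₂ + e₃) = e₁ + e₂ + e₃) :
    recast K h (dsum K A (dsum K B C)) = dsum K (dsum K A B) C := by
  ext a i j
  have hi := i.isLt
  have hj := j.isLt
  simp only [recast_mat, dsum_mat, Fin.val_cast, Pi.add_apply] at *
  split_ifs <;> first | rfl | omega | (congr 1 <;> ext <;> simp only <;> omega)

lemma recast_eq_dsum_zero_left (Z : Rep K Q 0) (M : Rep K Q d) (h : d = 0 + d) :
    recast K h M = dsum K Z M := by
  ext a i j
  simp only [recast_mat, dsum_mat, Pi.zero_apply, Nat.not_lt_zero, dite_false, Nat.sub_zero]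
  rfl

lemma recast_eq_dsum_zero_right (M : Rep K Q d) (Z : Rep K Q 0) (h : d = d + 0) :
    recast K h M = dsum K M Z := by
  ext a i j
  simp [recast_mat, dsum_mat]

lemma recast_dsum_right {e e' : Q.V → ℕ} (h' : e = e') (M : Rep K Q d) (N : Rep K Q e)
    (h : d + e = d + e') : recast K h (dsum K M N) = dsum K M (recast K h' N) := by
  subst h'; rfl

lemma listSum_append (L₁ L₂ : List (Σ e : Q.V → ℕ, Rep K Q e)) :
    recast K (sumDim_append L₁ L₂) (listSum K (L₁ ++ L₂))
      = dsum K (listSum K L₁) (listSum K L₂) := by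
  induction L₁ with
  | nil => exact recast_eq_dsum_zero_left _ _ _
  | cons x L ih =>
    have h₁ : x.1 + sumDim K (L ++ L₂) = x.1 + (sumDim K L + sumDim K L₂) := by
      rw [sumDim_append]
    have h₂ : x.1 + (sumDim K L + sumDim K L₂) = sumDim K (x :: L) + sumDim K L₂ :=
      (add_assoc _ _ _).symm
    calc recast K (sumDim_append (x :: L) L₂) (dsum K x.2 (listSum K (L ++ L₂)))
        = recast K h₂ (recast K h₁ (dsum K x.2 (listSum K (L ++ L₂)))) :=
          (recast_recast _ _ _).symm
      _ = recast K h₂ (dsum K x.2 (dsum K (listSum K L) (listSum K L₂))) := by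
          rw [recast_dsum_right (sumDim_append L L₂), ih]
      _ = (dsum K (dsum K x.2 (listSum K L)) (listSum K L₂) :
            Rep K Q (sumDim K (x :: L) + sumDim K L₂)) := dsum_assoc _ _ _ _

end DirectSum

section SumOfBands

lemma IsSumOfBands.iso {M N : Rep K Q d} (hM : IsSumOfBands K M) (h : Iso K M N) :
    IsSumOfBands K N := by
  obtain ⟨L, hL, hdim, hiso⟩ := hM
  exact ⟨L, hL, hdim, hiso.trans h⟩

lemma IsSumOfBands.dsum {M₁ : Rep K Q d₁} {M₂ : Rep K Q d₂} (h₁ : IsSumOfBands K M₁)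
    (h₂ : IsSumOfBands K M₂) : IsSumOfBands K (dsum K M₁ M₂) := by
  obtain ⟨L₁, hL₁, rfl, hiso₁⟩ := h₁
  obtain ⟨L₂, hL₂, rfl, hiso₂⟩ := h₂
  refine ⟨L₁ ++ L₂, fun p hp => (List.mem_append.mp hp).elim (hL₁ p) (hL₂ p),
    sumDim_append L₁ L₂, ?_⟩
  rw [listSum_append]
  exact hiso₁.dsum hiso₂

lemma isSumOfBands_of_eq_zero (M : Rep K Q d) (hd : d = 0) : IsSumOfBands K M := by
  subst hd
  refine ⟨[], by simp, rfl, ⟨1, ?_⟩⟩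
  ext a i
  exact i.elim0

lemma IsBand.isSumOfBands {M : Rep K Q d} (hM : IsBand K M) : IsSumOfBands K M := by
  refine ⟨[⟨d, M⟩], by simpa using hM, add_zero d, ⟨1, ?_⟩⟩
  rw [glAct_one]
  exact (congrArg (recast K (add_zero d))
    (recast_eq_dsum_zero_right M (listSum K []) (add_zero d).symm).symm).trans
    (recast_recast _ _ _)

lemma IsBand.totalRank_eq {M : Rep K Q d} (hM : IsBand K M) : M.totalRank = totalDim d :=
  hM.2.symm

lemma totalRank_listSum {L : List (Σ e : Q.V → ℕ, Rep K Q e)} (hL : ∀ p ∈ L, IsBand K p.2) :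
    (listSum K L).totalRank = totalDim (sumDim K L) := by
  induction L with
  | nil =>
    simp only [Rep.totalRank, listSum, totalDim, sumDim, Pi.zero_apply, Finset.sum_const_zero]
    exact Finset.sum_eq_zero fun _ _ => Matrix.rank_zero
  | cons x L ih =>
    change (dsum K x.2 (listSum K L)).totalRank = totalDim (x.1 + sumDim K L)
    rw [totalRank_dsum, ih fun p hp => hL p (List.mem_cons_of_mem x hp),
      totalDim_add, (hL x List.mem_cons_self).totalRank_eq]

lemma IsSumOfBands.totalRank_eq {M : Rep K Q d} (hM : IsSumOfBands K M) :
    M.totalRank = totalDim d := by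
  obtain ⟨L, hL, rfl, hiso⟩ := hM
  rw [← hiso.totalRank_eq, totalRank_recast, totalRank_listSum hL]

end SumOfBands

section Relations

def Rep.compMat (M : Rep K Q d) {a b : Q.Ar} (h : Q.t a = Q.s b) :
    Matrix (Fin (d (Q.t b))) (Fin (d (Q.s a))) K :=
  (M.mat b).submatrix id (finCongr (congrArg d h)) * M.mat a

lemma mem_pairModVar_iff (P : PairRels Q) (M : Rep K Q d) :
    M ∈ pairModVar K P d ↔ ∀ a b (hab : (a, b) ∈ P.R), M.compMat (P.comp _ hab) = 0 := by
  simp [pairModVar, Rep.compMat, ← Matrix.ext_iff, Matrix.mul_apply]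

lemma submatrix_finCongr_mul_inv_mul {m n : Type} [Fintype n] {x y : Q.V} (h : x = y)
    (g : ∀ v, Matrix.GeneralLinearGroup (Fin (d v)) K) (X : Matrix m (Fin (d y)) K)
    (Y : Matrix (Fin (d x)) n K) :
    (X * (↑((g y)⁻¹) : Matrix (Fin (d y)) (Fin (d y)) K)).submatrix id
        (finCongr (congrArg d h)) * ((g x : Matrix (Fin (d x)) (Fin (d x)) K) * Y)
      = X.submatrix id (finCongr (congrArg d h)) * Y := by
  subst h
  simp [Matrix.mul_assoc]

lemma compMat_glAct (g : ∀ v, Matrix.GeneralLinearGroup (Fin (d v)) K) (M : Rep K Q d)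
    {a b : Q.Ar} (h : Q.t a = Q.s b) :
    (glAct K g M).compMat h
      = (g (Q.t b) : Matrix (Fin (d (Q.t b))) (Fin (d (Q.t b))) K) * M.compMat h *
        (↑((g (Q.s a))⁻¹) : Matrix (Fin (d (Q.s a))) (Fin (d (Q.s a))) K) := by
  simp only [Rep.compMat, glAct, Matrix.mul_assoc]
  rw [Matrix.submatrix_mul _ _ id id _ Function.bijective_id, Matrix.submatrix_id_id,
    Matrix.mul_assoc, submatrix_finCongr_mul_inv_mul h]

lemma glAct_mem_pairModVar {P : PairRels Q} (g : ∀ v, Matrix.GeneralLinearGroup (Fin (d v)) K)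
    {M : Rep K Q d} (hM : M ∈ pairModVar K P d) : glAct K g M ∈ pairModVar K P d := by
  rw [mem_pairModVar_iff] at hM ⊢
  intro a b hab
  rw [compMat_glAct, hM a b hab, Matrix.mul_zero, Matrix.zero_mul]

lemma Iso.mem_pairModVar {P : PairRels Q} {M N : Rep K Q d} (h : Iso K M N)
    (hM : M ∈ pairModVar K P d) : N ∈ pairModVar K P d := by
  obtain ⟨g, rfl⟩ := h
  exact glAct_mem_pairModVar g hM

lemma submatrix_finCongr_reindex_fromBlocks {k₁ k₂ : ℕ} {x y : Q.V} (h : x = y)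
    (A : Matrix (Fin k₁) (Fin (d₁ y)) K) (B : Matrix (Fin k₂) (Fin (d₂ y)) K) :
    (Matrix.reindex finSumFinEquiv finSumFinEquiv (Matrix.fromBlocks A 0 0 B) :
        Matrix _ (Fin ((d₁ + d₂) y)) K).submatrix id (finCongr (congrArg (d₁ + d₂) h))
      = Matrix.reindex finSumFinEquiv finSumFinEquiv
          (Matrix.fromBlocks (A.submatrix id (finCongr (congrArg d₁ h))) 0 0
            (B.submatrix id (finCongr (congrArg d₂ h)))) := by
  subst h
  simp

lemma compMat_dsum (M : Rep K Q d₁) (N : Rep K Q d₂) {a b : Q.Ar} (h : Q.t a = Q.s b) :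
    (dsum K M N).compMat h = Matrix.reindex finSumFinEquiv finSumFinEquiv
      (Matrix.fromBlocks (M.compMat h) 0 0 (N.compMat h)) := by
  simp only [Rep.compMat, dsum]
  rw [submatrix_finCongr_reindex_fromBlocks h]
  simp [Matrix.fromBlocks_multiply]

lemma eq_zero_of_reindex_fromBlocks_eq_zero {k₁ k₂ l₁ l₂ : ℕ} {A : Matrix (Fin k₁) (Fin l₁) K}
    {B : Matrix (Fin k₂) (Fin l₂) K}
    (h : Matrix.reindex finSumFinEquiv finSumFinEquiv (Matrix.fromBlocks A 0 0 B) = 0) :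
    A = 0 ∧ B = 0 := by
  have hblocks : Matrix.fromBlocks A 0 0 B = Matrix.fromBlocks 0 0 0 0 := by
    rw [Matrix.fromBlocks_zero]
    exact (Matrix.reindex _ _).injective (h.trans (by simp))
  obtain ⟨hA, -, -, hB⟩ := Matrix.fromBlocks_inj.mp hblocks
  exact ⟨hA, hB⟩

lemma mem_pairModVar_of_dsum {P : PairRels Q} {M : Rep K Q d₁} {N : Rep K Q d₂}
    (h : dsum K M N ∈ pairModVar K P (d₁ + d₂)) :
    M ∈ pairModVar K P d₁ ∧ N ∈ pairModVar K P d₂ := by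
  simp only [mem_pairModVar_iff, compMat_dsum] at h ⊢
  exact ⟨fun a b hab => (eq_zero_of_reindex_fromBlocks_eq_zero (h a b hab)).1,
    fun a b hab => (eq_zero_of_reindex_fromBlocks_eq_zero (h a b hab)).2⟩

end Relations

section GentleBound

lemma sum_add_sum_le_card_mul_of_matching {ι : Type*} [DecidableEq ι] (r : ι → ℕ) (n : ℕ)
    (R : ι → ι → Prop) {A B : Finset ι} (hR : ∀ u ∈ A, ∀ v ∈ B, R u v → r u + r v ≤ n)
    (hex : ∀ u ∈ A, ∃ v ∈ B, R u v) (huniq : ∀ u₁ ∈ A, ∀ u₂ ∈ A, ∀ v, R u₁ v → R u₂ v → u₁ = u₂)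
    (hB : ∀ v ∈ B, r v ≤ n) : ∑ u ∈ A, r u + ∑ v ∈ B, r v ≤ B.card * n := by
  induction A using Finset.induction_on generalizing B with
  | empty => simpa using Finset.sum_le_card_nsmul B r n hB
  | insert u A hu ih =>
    obtain ⟨v, hvB, huv⟩ := hex u (Finset.mem_insert_self u A)
    have hex' : ∀ u' ∈ A, ∃ v' ∈ B.erase v, R u' v' := by
      intro u' hu'
      obtain ⟨v', hv'B, hu'v'⟩ := hex u' (Finset.mem_insert_of_mem hu')
      refine ⟨v', Finset.mem_erase.mpr ⟨?_, hv'B⟩, hu'v'⟩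
      rintro rfl
      exact hu (huniq u' (Finset.mem_insert_of_mem hu') u (Finset.mem_insert_self u A) v'
        hu'v' huv ▸ hu')
    have := ih (fun u' hu' v' hv' => hR u' (Finset.mem_insert_of_mem hu') v'
      (Finset.mem_of_mem_erase hv')) hex' (fun u₁ h₁ u₂ h₂ => huniq u₁
      (Finset.mem_insert_of_mem h₁) u₂ (Finset.mem_insert_of_mem h₂))
      fun v' hv' => hB v' (Finset.mem_of_mem_erase hv')
    rw [Finset.sum_insert hu, ← Finset.add_sum_erase B r hvB,
      ← Finset.card_erase_add_one hvB, add_mul, one_mul]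
    linarith [hR u (Finset.mem_insert_self u A) v hvB huv]

lemma card_filter_le_two {ι : Type*} [Fintype ι] {p : ι → Prop} [DecidablePred p]
    (h : AtMostTwo {i | p i}) : (Finset.univ.filter p).card ≤ 2 := by
  by_contra! hc
  obtain ⟨a, ha, b, hb, c, hc, hab, hac, hbc⟩ := Finset.two_lt_card.mp hc
  simp only [Finset.mem_filter, Finset.mem_univ, true_and] at ha hb hc
  rcases h a ha b hb c hc with h | h | h <;> contradiction

lemma exists_mem_of_one_lt_card {ι : Type*} {B : Finset ι} (hB : 1 < B.card) {p : ι → Prop}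
    (h : ∀ v₁ ∈ B, ∀ v₂ ∈ B, ¬ p v₁ → ¬ p v₂ → v₁ = v₂) : ∃ v ∈ B, p v := by
  obtain ⟨v₁, h₁, v₂, h₂, hne⟩ := Finset.one_lt_card.mp hB
  by_contra! hp
  exact hne (h v₁ h₁ v₂ h₂ (hp v₁ h₁) (hp v₂ h₂))

variable {P : PairRels Q} {M : Rep K Q d}

lemma rank_add_rank_le_of_mem_rels (hM : M ∈ pairModVar K P d) {u v : Q.Ar} (huv : (u, v) ∈ P.R) :
    (M.mat u).rank + (M.mat v).rank ≤ d (Q.t u) := by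
  have h := Matrix.rank_add_rank_le_card_of_mul_eq_zero ((mem_pairModVar_iff P M).mp hM u v huv)
  rwa [Fintype.card_fin, add_comm, show ((M.mat v).submatrix id _).rank = _ from
    Matrix.rank_submatrix _ (Equiv.refl _) _] at h

lemma sum_rank_in_add_sum_rank_out_le (hg : P.IsGentle) (hM : M ∈ pairModVar K P d) (x : Q.V) :
    ∑ a ∈ Finset.univ.filter (Q.t · = x), (M.mat a).rank
      + ∑ a ∈ Finset.univ.filter (Q.s · = x), (M.mat a).rank ≤ 2 * d x := by
  set In := Finset.univ.filter (Q.t · = x)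
  set Out := Finset.univ.filter (Q.s · = x)
  have mem_In : ∀ {u}, u ∈ In ↔ Q.t u = x := by simp [In]
  have mem_Out : ∀ {v}, v ∈ Out ↔ Q.s v = x := by simp [Out]
  have hIn : ∀ u ∈ In, (M.mat u).rank ≤ d x := fun u hu =>
    (Matrix.rank_le_height _).trans_eq (by rw [mem_In.mp hu])
  have hOut : ∀ v ∈ Out, (M.mat v).rank ≤ d x := fun v hv =>
    (Matrix.rank_le_width _).trans_eq (by rw [mem_Out.mp hv])
  have hrel : ∀ u ∈ In, ∀ v, (u, v) ∈ P.R → (M.mat u).rank + (M.mat v).rank ≤ d x :=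
    fun u hu v huv => (rank_add_rank_le_of_mem_rels hM huv).trans_eq (by rw [mem_In.mp hu])
  have hcardIn : In.card ≤ 2 := card_filter_le_two (hg.1 x).2
  have hcardOut : Out.card ≤ 2 := card_filter_le_two (hg.1 x).1
  have hcomp : ∀ u ∈ In, ∀ v ∈ Out, Q.t u = Q.s v := fun u hu v hv => by
    rw [mem_In.mp hu, mem_Out.mp hv]
  by_cases hOut2 : Out.card = 2
  · -- match each in-arrow `u` with the out-arrow `v` such that `vu ∈ I`
    refine (sum_add_sum_le_card_mul_of_matching _ _ (fun u v => (u, v) ∈ P.R)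
      (fun u hu v _ => hrel u hu v) (fun u hu => exists_mem_of_one_lt_card (by omega)
        fun v₁ h₁ v₂ h₂ n₁ n₂ =>
          (hg.2.1 u).1 v₁ ⟨hcomp u hu v₁ h₁, n₁⟩ v₂ ⟨hcomp u hu v₂ h₂, n₂⟩)
      (fun u₁ _ u₂ _ v h₁ h₂ => (hg.2.2 v).2 u₁ h₁ u₂ h₂) hOut).trans_eq (by rw [hOut2])
  by_cases hIn2 : In.card = 2
  · rw [add_comm]
    refine (sum_add_sum_le_card_mul_of_matching _ _ (fun v u => (u, v) ∈ P.R)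
      (fun v _ u hu h => (add_comm _ _).trans_le (hrel u hu v h))
      (fun v hv => exists_mem_of_one_lt_card (by omega) fun u₁ h₁ u₂ h₂ n₁ n₂ =>
        (hg.2.1 v).2 u₁ ⟨hcomp u₁ h₁ v hv, n₁⟩ u₂ ⟨hcomp u₂ h₂ v hv, n₂⟩)
      (fun v₁ _ v₂ _ u h₁ h₂ => (hg.2.2 u).1 v₁ h₁ v₂ h₂) hIn).trans_eq (by rw [hIn2])
  have hsumIn := Finset.sum_le_card_nsmul In _ _ hIn
  have hsumOut := Finset.sum_le_card_nsmul Out _ _ hOut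
  rw [smul_eq_mul] at hsumIn hsumOut
  have : In.card * d x ≤ d x := mul_le_of_le_one_left' (by omega)
  have : Out.card * d x ≤ d x := mul_le_of_le_one_left' (by omega)
  omega

lemma totalRank_le_totalDim (hg : P.IsGentle) (hM : M ∈ pairModVar K P d) :
    M.totalRank ≤ totalDim d := by
  have hsum := Finset.sum_le_sum fun x (_ : x ∈ Finset.univ) =>
    sum_rank_in_add_sum_rank_out_le hg hM x
  rw [Finset.sum_add_distrib, Finset.sum_fiberwise, Finset.sum_fiberwise,
    ← Finset.mul_sum] at hsum
  simp only [Rep.totalRank, totalDim]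
  omega

lemma isSumOfBands_of_totalRank_eq (hg : P.IsGentle) (hM : M ∈ pairModVar K P d)
    (heq : M.totalRank = totalDim d) : IsSumOfBands K M := by
  induction hn : totalDim d using Nat.strong_induction_on generalizing d with
  | _ n ih =>
    by_cases hd : d = 0
    · exact isSumOfBands_of_eq_zero M hd
    by_cases hind : Indec K M
    · exact IsBand.isSumOfBands ⟨hind, heq.symm⟩
    obtain ⟨d₁, d₂, M₁, M₂, rfl, hd₁, hd₂, hiso⟩ :
        ∃ (d₁ d₂ : Q.V → ℕ) (M₁ : Rep K Q d₁) (M₂ : Rep K Q d₂) (h : d₁ + d₂ = d),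
          d₁ ≠ 0 ∧ d₂ ≠ 0 ∧ Iso K (recast K h (dsum K M₁ M₂)) M := by
      simpa [Indec, hd] using hind
    obtain ⟨hM₁, hM₂⟩ := mem_pairModVar_of_dsum (hiso.symm.mem_pairModVar hM)
    have hrank : M₁.totalRank + M₂.totalRank = totalDim d₁ + totalDim d₂ := by
      rw [← totalRank_dsum, ← totalDim_add, ← heq]
      exact hiso.totalRank_eq
    have hle₁ := totalRank_le_totalDim hg hM₁
    have hle₂ := totalRank_le_totalDim hg hM₂
    have hpos₁ := mt totalDim_eq_zero.mp hd₁
    have hpos₂ := mt totalDim_eq_zero.mp hd₂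
    rw [totalDim_add] at hn
    -- both summands satisfy the bound and together attain it, so each attains it
    exact ((ih _ (by omega) hM₁ (by omega) rfl).dsum
      (ih _ (by omega) hM₂ (by omega) rfl)).iso hiso

lemma isSumOfBands_of_rank_le (hg : P.IsGentle) {M₀ : Rep K Q d}
    (hM₀ : IsSumOfBands K M₀) (hM : M ∈ pairModVar K P d)
    (hrank : ∀ a, (M₀.mat a).rank ≤ (M.mat a).rank) : IsSumOfBands K M :=
  isSumOfBands_of_totalRank_eq hg hM <| (totalRank_le_totalDim hg hM).antisymm <|
    hM₀.totalRank_eq ▸ Finset.sum_le_sum fun a _ => hrank a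

end GentleBound

section RankLocus

lemma exists_linearIndependent_rows_of_le_rank {m n r : ℕ} (A : Matrix (Fin m) (Fin n) K)
    (hr : r ≤ A.rank) : ∃ f : Fin r → Fin m, LinearIndependent K (A.submatrix f id).row := by
  obtain ⟨κ, a, ha, hspan, hli⟩ := exists_linearIndependent' K A.row
  have : Finite κ := Finite.of_injective a ha
  have := Fintype.ofFinite κ
  have hcard : r ≤ Fintype.card κ := by
    rwa [linearIndependent_iff_card_eq_finrank_span.mp hli, Set.finrank, hspan,
      ← Matrix.rank_eq_finrank_span_row]
  obtain ⟨e⟩ : Nonempty (Fin r ↪ κ) := Function.Embedding.nonempty_of_card_le (by simpa using hcard)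
  exact ⟨a ∘ e, hli.comp e e.injective⟩

lemma le_rank_iff_exists_submatrix_det_ne_zero {m n r : ℕ} (A : Matrix (Fin m) (Fin n) K) :
    r ≤ A.rank ↔ ∃ (f : Fin r → Fin m) (g : Fin r → Fin n), (A.submatrix f g).det ≠ 0 := by
  constructor
  · intro hr
    obtain ⟨f, hf⟩ := exists_linearIndependent_rows_of_le_rank A hr
    have hrT : r ≤ (A.submatrix f id).transpose.rank := by
      rw [Matrix.rank_transpose, hf.rank_matrix, Fintype.card_fin]
    obtain ⟨g, hg⟩ := exists_linearIndependent_rows_of_le_rank _ hrT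
    exact ⟨f, g, ((Matrix.isUnit_iff_isUnit_det _).mp
      (Matrix.linearIndependent_cols_iff_isUnit.mp hg)).ne_zero⟩
  · rintro ⟨f, g, hdet⟩
    have hunit := (Matrix.isUnit_iff_isUnit_det _).mpr (isUnit_iff_ne_zero.mpr hdet)
    simpa [Matrix.rank_of_isUnit _ hunit] using Matrix.rank_submatrix_le A f g

lemma isOpen_setOf_le_rank (rk : Q.Ar → ℕ) :
    IsOpen {M : Rep K Q d | ∀ a, rk a ≤ (M.mat a).rank} := by
  simp only [Set.ofPred_forall, le_rank_iff_exists_submatrix_det_ne_zero, Set.ofPred_exists]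
  refine isOpen_iInter_of_finite fun a => isOpen_iUnion fun f => isOpen_iUnion fun g => ?_
  have hminor : {M : Rep K Q d | ((M.mat a).submatrix f g).det ≠ 0}
      = Rep.coords K ⁻¹' {x | MvPolynomial.eval x
          (Matrix.of fun i j => MvPolynomial.X ⟨a, (f i, g j)⟩).det ≠ 0} := by
    ext M
    have hmap : (Matrix.of fun i j => MvPolynomial.X ⟨a, (f i, g j)⟩).map
        (MvPolynomial.eval (Rep.coords K M)) = (M.mat a).submatrix f g := by
      ext i j
      exact MvPolynomial.eval_X _
    simp [RingHom.map_det, RingHom.mapMatrix_apply, hmap]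
  rw [hminor, isOpen_induced_iff]
  exact ⟨_, TopologicalSpace.isOpen_generateFrom_of_mem ⟨_, rfl⟩, rfl⟩

end RankLocus

theorem regular_component_iff_contains_sum_of_bands_general
    (K : Type) [Field K]
    (Q : Quiv) (P : PairRels Q) (hgentle : P.IsGentle)
    (d : Q.V → ℕ) (C : Set (Rep K Q d))
    (hC : IsIrrComp K (pairModVar K P d) C) :
    (IsGenericallyBands K C ↔ ∃ M ∈ C, IsSumOfBands K M) ∧
    (∀ M₀ ∈ C, IsSumOfBands K M₀ →
      ∀ M ∈ C, (∀ a : Q.Ar, (M.mat a).rank = sSup {r : ℕ | ∃ X ∈ C, (X.mat a).rank = r}) →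
        IsSumOfBands K M) := by
  refine ⟨⟨fun ⟨U, _, ⟨M, hMU, hMC⟩, hU⟩ => ⟨M, hMC, hU M ⟨hMU, hMC⟩⟩, ?_⟩, ?_⟩
  · rintro ⟨M₀, hM₀C, hM₀⟩
    exact ⟨_, isOpen_setOf_le_rank fun a => (M₀.mat a).rank, ⟨M₀, fun _ => le_rfl, hM₀C⟩,
      fun M ⟨hMU, hMC⟩ => isSumOfBands_of_rank_le hgentle hM₀ (hC.1 hMC) hMU⟩
  · intro M₀ hM₀C hM₀ M hMC hmax
    refine isSumOfBands_of_rank_le hgentle hM₀ (hC.1 hMC) fun a => ?_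
    rw [hmax a]
    exact le_csSup ⟨d (Q.s a), by rintro _ ⟨X, -, rfl⟩; exact Matrix.rank_le_width _⟩
      ⟨M₀, hM₀C, rfl⟩

/-- Observation 4.3.  Let `A = KQ/I` be an acyclic gentle
algebra and `C ⊆ mod(A,d)` an irreducible component.  Then `C` is regular (its
generic module is a direct sum of band modules) if and only if `C` contains a
module which is a direct sum of band modules.  Moreover, if `C` contains a
module which is a direct sum of band modules, then every module in the open
subset `U = {M ∈ C : rank M(a) is maximal on C for every arrow a}` is a direct
sum of band modules. -/
theorem regular_component_iff_contains_sum_of_bands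
    (K : Type) [Field K] [IsAlgClosed K] [CharZero K]
    (Q : Quiv) (P : PairRels Q) (hgentle : P.IsGentle) (hacyclic : Q.IsAcyclic)
    (d : Q.V → ℕ) (C : Set (Rep K Q d))
    (hC : IsIrrComp K (pairModVar K P d) C) :
    (IsGenericallyBands K C ↔ ∃ M ∈ C, IsSumOfBands K M) ∧
    (∀ M₀ ∈ C, IsSumOfBands K M₀ →
      ∀ M ∈ C, (∀ a : Q.Ar, (M.mat a).rank = sSup {r : ℕ | ∃ X ∈ C, (X.mat a).rank = r}) →
        IsSumOfBands K M) :=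
  regular_component_iff_contains_sum_of_bands_general K Q P hgentle d C hC

end ModuliPaper
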